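/- arXiv:math/0606163 — 2 statements merged into one kernel-verified Lean document; each statement's English description precedes it below -/
import Mathlib

section
/- For every integer n ≥ 2, as formal power series over ℚ, x² · Q_n(x) · F(n,x) = Q_{n−2}(x) − (1+x)·Q_n(x), where the polynomials Q_{n−2}, Q_n and 1+x are regarded as power series. Consequently F(n,x) is a rational function with denominator Q_n(x) and numerator the polynomial P_n(x) = (Q_{n−2}(x) − (1+x)Q_n(x))/x² of degree n. -/
/-- The `(n+1) × (n+1)` 0-1 matrix whose `(i,j)` entry is `1` iff `i + j ≤ n`,
with integer entries. -/
def B (n : ℕ) : Matrix (Fin (n + 1)) (Fin (n + 1)) ℤ :=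
  Matrix.of fun i j => if (i : ℕ) + (j : ℕ) ≤ n then 1 else 0

/-- `s M` is the sum of all entries of the square matrix `M`. -/
def s {n : ℕ} (M : Matrix (Fin n) (Fin n) ℤ) : ℤ := ∑ i, ∑ j, M i j

/-- `F n` is the power series `∑_{k ≥ 0} s(B(n)^k) xᵏ` over `ℚ`. -/
noncomputable def F (n : ℕ) : PowerSeries ℚ := PowerSeries.mk fun k => (s (B n ^ k) : ℚ)

/-- `Q n = det (I - x • B(n))`, a polynomial with integer coefficients. -/
noncomputable def Q (n : ℕ) : Polynomial ℤ :=
  ((1 : Matrix (Fin (n + 1)) (Fin (n + 1)) (Polynomial ℤ))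
    - (Polynomial.X : Polynomial ℤ) • (B n).map (Polynomial.C ·)).det

/-- The polynomial `Q n`, regarded as a power series over `ℚ`. -/
noncomputable def Qs (n : ℕ) : PowerSeries ℚ :=
  (((Q n).map (Int.castRingHom ℚ) : Polynomial ℚ) : PowerSeries ℚ)

/-!
Over `ℚ⟦x⟧` let `M_k = 1 - x B(k)` and `y = M_n⁻¹ 𝟙 = ∑_k B(n)^k 𝟙 xᵏ`. The first row of `B(n)`
is all ones, so `y₀ = 1 + x F(n)`, and Cramer's rule gives
`det (M_n with column 0 replaced by 𝟙) = Q_n (1 + x F(n))`. On the other hand column 0 of `M_n` is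
`e₀ - x 𝟙`, so `Q_n + x det (M_n with column 0 replaced by 𝟙) = det (M_n with column 0 replaced
by e₀)`; expanding along column 0, and then along the last column of the minor (again a unit
vector), turns the right-hand side into `Q_{n-2}`. Hence `Q_{n-2} = Q_n + x Q_n (1 + x F(n))`.

The degree of `P_n` follows from `deg Q_k = k + 1`: `Q_k` is the reversed characteristic
polynomial of `B(k)`, which is invertible, being a row permutation of a unitriangular matrix.
-/

open Matrix

namespace Matrix

variable {R : Type*} [CommRing R]

theorem submatrix_one_sub_smul {l n : Type*} [DecidableEq l] [DecidableEq n] (x : R)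
    (A : Matrix n n R) {e : l → n} (he : Function.Injective e) :
    (1 - x • A).submatrix e e = 1 - x • A.submatrix e e := by
  rw [← submatrix_one e he]
  rfl

variable {n : Type*} [Fintype n] [DecidableEq n]

theorem det_updateCol_of_mulVec_eq {A : Matrix n n R} {y b : n → R} (h : A *ᵥ y = b) (j : n) :
    (A.updateCol j b).det = A.det * y j := by
  rw [← cramer_apply, ← h, cramer_eq_adjugate_mulVec, mulVec_mulVec, adjugate_mul, smul_mulVec,
    one_mulVec, Pi.smul_apply, smul_eq_mul]

theorem det_updateCol_single_one {m : ℕ} (A : Matrix (Fin (m + 1)) (Fin (m + 1)) R)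
    (i j : Fin (m + 1)) :
    (A.updateCol j (Pi.single i 1)).det
      = (-1) ^ (i + j : ℕ) * (A.submatrix i.succAbove j.succAbove).det := by
  rw [← det_transpose, ← updateRow_transpose, ← adjugate_apply, adjugate_fin_succ_eq_det_submatrix,
    ← transpose_submatrix, det_transpose, add_comm]

theorem map_charpolyRev {S : Type*} [CommRing S] (f : Polynomial R →+* S) (A : Matrix n n R) :
    f A.charpolyRev = (1 - f Polynomial.X • A.map (f.comp Polynomial.C)).det := by
  rw [charpolyRev, RingHom.map_det, RingHom.mapMatrix_apply]
  congr 1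
  ext i j
  simp only [map_apply, sub_apply, one_apply, smul_apply, smul_eq_mul, map_sub, map_mul,
    apply_ite f, map_one, map_zero, RingHom.comp_apply]

theorem natDegree_charpolyRev_of_det_ne_zero [Nontrivial R] {A : Matrix n n R} (h : A.det ≠ 0) :
    A.charpolyRev.natDegree = Fintype.card n := by
  have hc : A.charpoly.coeff 0 ≠ 0 := fun h0 => h (by rw [det_eq_sign_charpoly_coeff, h0, mul_zero])
  rw [← reverse_charpoly, Polynomial.reverse_natDegree, charpoly_natDegree_eq_dim,
    Polynomial.natTrailingDegree_eq_zero.mpr (.inr hc), Nat.sub_zero]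

end Matrix

theorem Polynomial.X_pow_dvd_of_X_pow_dvd_coe_map {R S : Type*} [CommRing R] [CommRing S]
    {f : R →+* S} (hf : Function.Injective f) {p : Polynomial R} {k : ℕ}
    (h : PowerSeries.X ^ k ∣ ((p.map f : Polynomial S) : PowerSeries S)) :
    Polynomial.X ^ k ∣ p := by
  refine Polynomial.X_pow_dvd_iff.mpr fun d hd => hf ?_
  rw [map_zero, ← Polynomial.coeff_map, ← Polynomial.coeff_coe]
  exact PowerSeries.X_pow_dvd_iff.mp h d hd

section resolvent

variable {R : Type*} [CommRing R] {n : Type*} [Fintype n] [DecidableEq n]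

noncomputable def resolventSeries (A : Matrix n n R) (v : n → R) : n → PowerSeries R :=
  fun i => PowerSeries.mk fun k => (A ^ k *ᵥ v) i

theorem resolventSeries_eq_C_add_X_mul (A : Matrix n n R) (v : n → R) (i : n) :
    resolventSeries A v i
      = PowerSeries.C (v i) + PowerSeries.X * resolventSeries A (A *ᵥ v) i := by
  ext (_ | k)
  · simp [resolventSeries]
  · simp [resolventSeries, PowerSeries.coeff_succ_X_mul, pow_succ, mulVec_mulVec]

theorem map_C_mulVec_resolventSeries (A : Matrix n n R) (v : n → R) :
    A.map PowerSeries.C *ᵥ resolventSeries A v = resolventSeries A (A *ᵥ v) := by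
  funext i
  ext k
  have hcoeff : PowerSeries.coeff k ((A.map PowerSeries.C *ᵥ resolventSeries A v) i)
      = (A *ᵥ (A ^ k *ᵥ v)) i := by
    simp [resolventSeries, mulVec, dotProduct, map_sum, PowerSeries.coeff_C_mul]
  rw [hcoeff, mulVec_mulVec, ← pow_succ', pow_succ, ← mulVec_mulVec]
  simp [resolventSeries]

theorem one_sub_X_smul_mulVec_resolventSeries (A : Matrix n n R) (v : n → R) :
    (1 - (PowerSeries.X : PowerSeries R) • A.map PowerSeries.C) *ᵥ resolventSeries A v
      = fun i => PowerSeries.C (v i) := by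
  funext i
  rw [sub_mulVec, one_mulVec, smul_mulVec, map_C_mulVec_resolventSeries, Pi.sub_apply,
    Pi.smul_apply, smul_eq_mul, resolventSeries_eq_C_add_X_mul A v i, add_sub_cancel_right]

end resolvent

/-- `B k` is `staircase ℤ k (k + 1)`; the minors of `1 - x B(k)` met in the expansion have the
same shape with other sizes `N`. -/
def staircase (R : Type*) [Zero R] [One R] (k N : ℕ) : Matrix (Fin N) (Fin N) R :=
  of fun i j => if (i : ℕ) + j ≤ k then 1 else 0

section staircase

variable {R : Type*} {k N : ℕ}

theorem B_map_eq_staircase [NonAssocRing R] (f : ℤ →+* R) (k : ℕ) :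
    (B k).map f = staircase R k (k + 1) := by
  ext i j
  simp only [B, staircase, map_apply, of_apply]
  split_ifs <;> simp

variable [Zero R] [One R]

theorem staircase_submatrix_succ :
    (staircase R (k + 2) (N + 1)).submatrix Fin.succ Fin.succ = staircase R k N := by
  ext i j
  simp only [staircase, submatrix_apply, of_apply, Fin.val_succ]
  congr 1
  simp only [eq_iff_iff]
  omega

theorem staircase_submatrix_castSucc :
    (staircase R k (N + 1)).submatrix Fin.castSucc Fin.castSucc = staircase R k N := rfl

theorem staircase_apply_zero (h : N ≤ k) (i : Fin (N + 1)) : staircase R k (N + 1) i 0 = 1 :=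
  if_pos (by simp only [Fin.val_zero]; omega)

theorem staircase_apply_last (h : k < N) (i : Fin (N + 1)) :
    staircase R k (N + 1) i (Fin.last N) = 0 :=
  if_neg (by simp only [Fin.val_last]; omega)

end staircase

section det_staircase

variable {R : Type*} [CommRing R] {k N : ℕ}

theorem det_one_sub_smul_staircase_succ (x : R) (h : k < N) :
    (1 - x • staircase R k (N + 1)).det = (1 - x • staircase R k N).det := by
  set M := 1 - x • staircase R k (N + 1)
  have hcol : (fun i => M i (Fin.last N)) = Pi.single (Fin.last N) 1 := by
    funext i
    simp [M, staircase_apply_last h, one_apply, Pi.single_apply]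
  rw [← updateCol_eq_self M (Fin.last N), hcol, det_updateCol_single_one, Fin.succAbove_last,
    submatrix_one_sub_smul x _ (Fin.castSucc_injective N), staircase_submatrix_castSucc]
  simp

theorem det_one_sub_smul_staircase_add_two (x : R) (h : N ≤ k + 2) :
    (1 - x • staircase R (k + 2) (N + 1)).det
      + x * ((1 - x • staircase R (k + 2) (N + 1)).updateCol 0 1).det
      = (1 - x • staircase R k N).det := by
  set M := 1 - x • staircase R (k + 2) (N + 1)
  have hcol : Pi.single 0 1 = (fun i => M i 0) + x • (1 : Fin (N + 1) → R) := by
    funext i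
    simp [M, staircase_apply_zero h, one_apply, Pi.single_apply]
  calc M.det + x * (M.updateCol 0 1).det = (M.updateCol 0 (Pi.single 0 1)).det := by
        rw [hcol, det_updateCol_add, det_updateCol_smul, updateCol_eq_self]
    _ = (1 - x • staircase R k N).det := by
        rw [det_updateCol_single_one, Fin.succAbove_zero,
          submatrix_one_sub_smul x _ (Fin.succ_injective _), staircase_submatrix_succ]
        simp

end det_staircase

theorem det_B_ne_zero (k : ℕ) : (B k).det ≠ 0 := by
  have hL : ((B k).submatrix Fin.revPerm id).det = 1 := by
    rw [det_of_isLowerTriangular]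
    · refine Finset.prod_eq_one fun i _ => ?_
      simp only [B, submatrix_apply, of_apply, Fin.revPerm_apply, Fin.val_rev, id]
      rw [if_pos (by omega)]
    · intro i j hij
      rw [OrderDual.toDual_lt_toDual, Fin.lt_def] at hij
      simp only [B, submatrix_apply, of_apply, Fin.revPerm_apply, Fin.val_rev, id]
      rw [if_neg (by omega)]
  intro h
  simp [det_permute, h] at hL

theorem natDegree_Q (k : ℕ) : (Q k).natDegree = k + 1 := by
  rw [Q, ← charpolyRev, natDegree_charpolyRev_of_det_ne_zero (det_B_ne_zero k), Fintype.card_fin]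

theorem natDegree_Q_sub_one_add_X_mul_Q (m : ℕ) :
    (Q m - (1 + Polynomial.X) * Q (m + 2)).natDegree = m + 4 := by
  have hQ : Q (m + 2) ≠ 0 := fun h => by simpa [h] using natDegree_Q (m + 2)
  have hlin : (1 + Polynomial.X : Polynomial ℤ).natDegree = 1 := by compute_degree!
  have hprod : ((1 + Polynomial.X) * Q (m + 2)).natDegree = m + 4 := by
    rw [Polynomial.natDegree_mul (fun h => by simp [h] at hlin) hQ, hlin, natDegree_Q]
    ring
  rw [Polynomial.natDegree_sub_eq_right_of_natDegree_lt (by rw [hprod, natDegree_Q]; omega), hprod]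

theorem Qs_eq_det (k : ℕ) :
    Qs k = (1 - (PowerSeries.X : PowerSeries ℚ) • staircase (PowerSeries ℚ) k (k + 1)).det := by
  rw [show Qs k = (Polynomial.coeToPowerSeries.ringHom.comp
      (Polynomial.mapRingHom (Int.castRingHom ℚ))) (B k).charpolyRev from rfl,
    map_charpolyRev, B_map_eq_staircase]
  simp [Polynomial.coeToPowerSeries.ringHom_apply]

theorem resolventSeries_B_zero (n : ℕ) :
    resolventSeries ((B n).map (Int.castRingHom ℚ)) 1 0 = 1 + PowerSeries.X * F n := by
  ext (_ | k)
  · simp [resolventSeries]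
  · rw [map_add, PowerSeries.coeff_succ_X_mul, PowerSeries.coeff_one, if_neg k.succ_ne_zero,
      zero_add, resolventSeries, PowerSeries.coeff_mk, pow_succ', ← mulVec_mulVec, F,
      PowerSeries.coeff_mk, s, ← Matrix.map_pow]
    simp [B, mulVec, dotProduct, Fin.is_le]

theorem X_sq_mul_Qs_mul_F (m : ℕ) :
    PowerSeries.X ^ 2 * Qs (m + 2) * F (m + 2)
      = Qs m - (1 + PowerSeries.X) * Qs (m + 2) := by
  set A := (B (m + 2)).map (Int.castRingHom ℚ)
  have hres : (1 - (PowerSeries.X : PowerSeries ℚ) • staircase (PowerSeries ℚ) (m + 2) (m + 3))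
      *ᵥ resolventSeries A 1 = 1 := by
    have h := one_sub_X_smul_mulVec_resolventSeries A 1
    rw [Matrix.map_map, ← RingHom.coe_comp, B_map_eq_staircase] at h
    exact h.trans (funext fun _ => map_one _)
  have hcramer := det_updateCol_of_mulVec_eq hres 0
  rw [resolventSeries_B_zero] at hcramer
  have hexpand := det_one_sub_smul_staircase_add_two (PowerSeries.X : PowerSeries ℚ) (k := m)
    (N := m + 2) le_rfl
  rw [hcramer, det_one_sub_smul_staircase_succ _ (lt_add_one m)] at hexpand
  rw [Qs_eq_det, Qs_eq_det, ← hexpand]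
  ring

theorem F_eq_P_div_Q (n : ℕ) (hn : 2 ≤ n) :
    PowerSeries.X ^ 2 * Qs n * F n = Qs (n - 2) - (1 + PowerSeries.X) * Qs n ∧
    ∃ P : Polynomial ℤ,
      Polynomial.X ^ 2 * P = Q (n - 2) - (1 + Polynomial.X) * Q n ∧
      P.natDegree = n := by
  obtain ⟨m, rfl⟩ := Nat.exists_eq_add_of_le' hn
  rw [Nat.add_sub_cancel]
  have hseries := X_sq_mul_Qs_mul_F m
  refine ⟨hseries, ?_⟩
  obtain ⟨P, hP⟩ : Polynomial.X ^ 2 ∣ Q m - (1 + Polynomial.X) * Q (m + 2) := by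
    refine Polynomial.X_pow_dvd_of_X_pow_dvd_coe_map (Int.castRingHom ℚ).injective_int
      ⟨Qs (m + 2) * F (m + 2), ?_⟩
    rw [← mul_assoc, hseries, Qs, Qs]
    simp
  refine ⟨P, hP.symm, ?_⟩
  have hdeg := natDegree_Q_sub_one_add_X_mul_Q m
  have hP0 : P ≠ 0 := fun h => by simp [hP, h] at hdeg
  rw [hP, Polynomial.natDegree_X_pow_mul (n := 2) hP0] at hdeg
  omega
end

section
/- For every integer n ≥ 4, the polynomials Q_n(x) = det(I − x·B(n)) satisfy the recurrence Q_n(x) + (x² − 2)·Q_{n−2}(x) + Q_{n−4}(x) = 0 in ℤ[x]. -/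
/-! Write `Aₙ = I - x B(n)`. Its last row is `(-x, 0, …, 0, 1)`, so after adding `x` times the last
column to column `0` the determinant is that of the leading `n × n` block. In that block, subtract
row `1` from row `0` and column `1` from column `0`: since `B(n)` restricted to the indices
`1, …, n - 1` is `B(n - 2)` and its row and column `0` are all ones, this leaves the bordered matrix
`[[2 - x², -e₀ᵀ], [-e₀, A_{n-2}]]`. Expanding along the border, and noting that `A_{n-2}` without
its first row and column is `A_{n-4}` followed by a diagonal `1`, gives
`Q n = (2 - x²) Q (n - 2) - Q (n - 4)`. -/

open Polynomial Matrix

namespace Matrix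

variable {R : Type*} [CommRing R]

/-- Deleting the first (last) row and column of a leading block gives a leading block of the
shifted (same) array, which keeps all index bookkeeping in `ℕ`. -/
def leadingBlock (m : ℕ) (f : ℕ → ℕ → R) : Matrix (Fin m) (Fin m) R :=
  of fun i j => f i j

variable {m : ℕ} {f : ℕ → ℕ → R}

theorem det_leadingBlock_updateCol_add_mul_self {k l : ℕ} (hk : k < m) (hl : l < m) (hkl : l ≠ k)
    (c : R) :
    det (leadingBlock m fun i j => if j = l then f i l + c * f i k else f i j) =
      det (leadingBlock m f) := by
  convert det_updateCol_add_smul_self (leadingBlock m f) (i := ⟨l, hl⟩) (j := ⟨k, hk⟩)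
    (by simpa [Fin.ext_iff] using hkl) c using 2
  ext i j
  simp [leadingBlock, updateCol_apply, Fin.ext_iff]

theorem det_leadingBlock_updateRow_add_mul_self {k l : ℕ} (hk : k < m) (hl : l < m) (hkl : l ≠ k)
    (c : R) :
    det (leadingBlock m fun i j => if i = l then f l j + c * f k j else f i j) =
      det (leadingBlock m f) := by
  rw [← det_transpose, ← det_transpose (leadingBlock m f)]
  exact det_leadingBlock_updateCol_add_mul_self (f := fun i j => f j i) hk hl hkl c

theorem det_leadingBlock_succ_of_last_row (hoff : ∀ j < m, f m j = 0) (hdiag : f m m = 1) :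
    det (leadingBlock (m + 1) f) = det (leadingBlock m f) := by
  rw [det_succ_row _ (Fin.last m), Finset.sum_eq_single (Fin.last m)]
  · have hminor : (leadingBlock (m + 1) f).submatrix Fin.castSucc Fin.castSucc =
        leadingBlock m f := rfl
    rw [Fin.succAbove_last, hminor]
    simp [leadingBlock, hdiag, ← two_mul, pow_mul]
  · intro j _ hj
    simp [leadingBlock, hoff j (Fin.val_lt_last hj)]
  · simp

theorem det_leadingBlock_add_two (hrow : ∀ j, 2 ≤ j → j < m + 2 → f 0 j = 0)
    (hcol : ∀ i, 2 ≤ i → i < m + 2 → f i 0 = 0) :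
    det (leadingBlock (m + 2) f) =
      f 0 0 * det (leadingBlock (m + 1) fun i j => f (i + 1) (j + 1))
        - f 0 1 * f 1 0 * det (leadingBlock m fun i j => f (i + 2) (j + 2)) := by
  have hminor₀ : (leadingBlock (m + 2) f).submatrix Fin.succ (Fin.succAbove 0) =
      leadingBlock (m + 1) fun i j => f (i + 1) (j + 1) := by
    ext i j
    simp [leadingBlock]
  have hminor₁ : det ((leadingBlock (m + 2) f).submatrix Fin.succ (Fin.succAbove 1)) =
      f 1 0 * det (leadingBlock m fun i j => f (i + 2) (j + 2)) := by
    rw [det_succ_column_zero, Fin.sum_univ_succ, Finset.sum_eq_zero, add_zero]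
    · have hminor : ((leadingBlock (m + 2) f).submatrix Fin.succ (Fin.succAbove 1)).submatrix
          (Fin.succAbove 0) Fin.succ = leadingBlock m fun i j => f (i + 2) (j + 2) := by
        ext i j
        simp [leadingBlock]
      rw [hminor]
      simp [leadingBlock]
    · intro i _
      simp [leadingBlock, hcol (i + 2) (by omega) (by omega)]
  rw [det_succ_row_zero, Fin.sum_univ_succ, Fin.sum_univ_succ, Finset.sum_eq_zero, add_zero]
  · rw [Fin.succ_zero_eq_one, hminor₁, hminor₀]
    simp only [leadingBlock, of_apply, Fin.val_zero, Fin.val_one, pow_zero, pow_one]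
    ring
  · intro j _
    simp [leadingBlock, hrow (j + 2) (by omega) (by omega)]

end Matrix

section

variable {R : Type*} [CommRing R]

/-- `I - x • B t`, extended to an infinite array. -/
def qArray (x : R) (t i j : ℕ) : R :=
  (if i = j then 1 else 0) - if i + j ≤ t then x else 0

theorem qArray_add_one_add_one (x : R) (t i j : ℕ) :
    qArray x (t + 2) (i + 1) (j + 1) = qArray x t i j := by
  simp only [qArray, Nat.add_right_cancel_iff]
  congr 1
  exact if_congr (by omega) rfl rfl

theorem qArray_shift (x : R) (t : ℕ) :
    (fun i j => qArray x (t + 2) (i + 1) (j + 1)) = qArray x t :=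
  funext₂ (qArray_add_one_add_one x t)

theorem qArray_shift_two (x : R) (t : ℕ) :
    (fun i j => qArray x (t + 4) (i + 2) (j + 2)) = qArray x t :=
  funext₂ fun i j => (qArray_add_one_add_one x (t + 2) (i + 1) (j + 1)).trans
    (qArray_add_one_add_one x t i j)

theorem det_leadingBlock_qArray_succ (x : R) {m t : ℕ} (h : t < m) :
    det (leadingBlock (m + 1) (qArray x t)) = det (leadingBlock m (qArray x t)) :=
  det_leadingBlock_succ_of_last_row
    (fun j hj => by simp [qArray, hj.ne', show ¬m + j ≤ t by omega])
    (by simp [qArray, show ¬m + m ≤ t by omega])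

theorem det_leadingBlock_qArray_recurrence (x : R) (t : ℕ) :
    det (leadingBlock (t + 5) (qArray x (t + 4))) =
      (2 - x ^ 2) * det (leadingBlock (t + 3) (qArray x (t + 2)))
        - det (leadingBlock (t + 1) (qArray x t)) := by
  rw [← det_leadingBlock_updateCol_add_mul_self (k := t + 4) (l := 0) (c := x),
    det_leadingBlock_succ_of_last_row,
    ← det_leadingBlock_updateRow_add_mul_self (k := 1) (l := 0) (c := -1),
    ← det_leadingBlock_updateCol_add_mul_self (k := 1) (l := 0) (c := -1),
    det_leadingBlock_add_two, ← det_leadingBlock_qArray_succ x (m := t + 1) (by omega)]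
  · simp only [Nat.add_eq_zero_iff, one_ne_zero, OfNat.ofNat_ne_zero, and_false, ↓reduceIte,
      qArray_shift, qArray_shift_two]
    simp only [qArray, ↓reduceIte, Nat.right_eq_add, Nat.add_eq_zero_iff, OfNat.ofNat_ne_zero,
      and_false, zero_add, le_refl, add_le_iff_nonpos_left, nonpos_iff_eq_zero, one_ne_zero,
      zero_ne_one, le_add_iff_nonneg_left, zero_le, Nat.reduceAdd]
    ring
  case hrow | hcol =>
    intro j _ _
    simp only [qArray]
    split_ifs <;> first | omega | ring
  case hoff =>
    intro j hj
    simp +contextual [qArray, hj.ne']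
  case hdiag => simp [qArray]
  all_goals omega

end

theorem Q_eq_det_leadingBlock (n : ℕ) : Q n = det (leadingBlock (n + 1) (qArray X n)) := by
  unfold Q
  congr 1
  ext i j
  simp [B, qArray, leadingBlock, one_apply, Fin.ext_iff]

theorem Q_recurrence (n : ℕ) (hn : 4 ≤ n) :
    Q n + (Polynomial.X ^ 2 - 2) * Q (n - 2) + Q (n - 4) = 0 := by
  obtain ⟨t, rfl⟩ : ∃ t, n = t + 4 := ⟨n - 4, by omega⟩
  rw [show t + 4 - 2 = t + 2 by omega, Nat.add_sub_cancel, Q_eq_det_leadingBlock,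
    Q_eq_det_leadingBlock, Q_eq_det_leadingBlock, det_leadingBlock_qArray_recurrence]
  ring
end
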